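/- arXiv:1409.6109 — 2 statements merged into one kernel-verified Lean document; each statement's English description precedes it below -/
import Mathlib

section
/- Let w ∈ ℝ^d and define f : ℝ^d → ℝ by f(x) = exp(wᵀx). Then for every multi-index 𝐤 ∈ ℕ₀^d the Hermite coefficient of f is f̂(𝐤) = e^{wᵀw/2} w^𝐤 / √(𝐤!), and for every 𝛚 ∈ (0,1)^d and 𝛄 ∈ (0,∞)^d the function f belongs to the Hermite space 𝓗_{𝛆_{𝛚,𝛄}} (its weighted norm ‖f‖_{𝛆_{𝛚,𝛄}} is finite). -/
open MeasureTheory Real Filter Asymptotics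

noncomputable section

/-- Standard Gaussian density on `ℝ^d`. -/
def gaussD (d : ℕ) (x : Fin d → ℝ) : ℝ :=
  (2 * π) ^ (-(d : ℝ) / 2) * Real.exp (-(∑ i, (x i) ^ 2) / 2)

/-- Normalized (probabilists') Hermite polynomial `H_k`. -/
def Hnorm (k : ℕ) (x : ℝ) : ℝ :=
  (Polynomial.aeval x (Polynomial.hermite k)) / Real.sqrt (Nat.factorial k)

/-- Multivariate Hermite polynomial indexed by a multi-index. -/
def Hmulti {d : ℕ} (k : Fin d → ℕ) (x : Fin d → ℝ) : ℝ :=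
  ∏ j, Hnorm (k j) (x j)

/-- Gaussian square-integrability. -/
def GaussianSqInt {d : ℕ} (f : (Fin d → ℝ) → ℝ) : Prop :=
  MeasureTheory.Integrable (fun x => (f x) ^ 2 * gaussD d x)

/-- `k`-th Hermite coefficient of `f`. -/
def hCoeff {d : ℕ} (f : (Fin d → ℝ) → ℝ) (k : Fin d → ℕ) : ℝ :=
  ∫ x, f x * Hmulti k x * gaussD d x

/-- Membership in the Hermite space `𝓗_r`. -/
def memHermite {d : ℕ} (r : (Fin d → ℕ) → ℝ) (f : (Fin d → ℝ) → ℝ) : Prop :=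
  Continuous f ∧ GaussianSqInt f ∧
    Summable (fun k : Fin d → ℕ => (r k)⁻¹ * (hCoeff f k) ^ 2)

/-- Squared Hermite-space norm `‖f‖_r²`. -/
def hNormSq {d : ℕ} (r : (Fin d → ℕ) → ℝ) (f : (Fin d → ℝ) → ℝ) : ℝ :=
  ∑' k : Fin d → ℕ, (r k)⁻¹ * (hCoeff f k) ^ 2

/-- Gaussian integral `I(f)`. -/
def qmcInt {d : ℕ} (f : (Fin d → ℝ) → ℝ) : ℝ := ∫ x, f x * gaussD d x

/-- QMC rule `Q_{n,d}(f,P)`. -/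
def qmcRule {d n : ℕ} (f : (Fin d → ℝ) → ℝ) (P : Fin n → Fin d → ℝ) : ℝ :=
  (1 / (n : ℝ)) * ∑ i, f (P i)

/-- Worst-case error of QMC integration in `𝓗_r` with point set `P`. -/
def wce (d n : ℕ) (r : (Fin d → ℕ) → ℝ) (P : Fin n → Fin d → ℝ) : ℝ :=
  sSup {e : ℝ | ∃ f : (Fin d → ℝ) → ℝ,
    memHermite r f ∧ hNormSq r f ≤ 1 ∧ e = |qmcInt f - qmcRule f P|}

/-- Information complexity of QMC integration in `𝓗_r`. -/
def nmin (d : ℕ) (r : (Fin d → ℕ) → ℝ) (ε : ℝ) : ℕ :=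
  sInf {n : ℕ | 0 < n ∧ ∃ P : Fin n → Fin d → ℝ, wce d n r P ≤ ε}

/-- The weight `p_{α,γ}` with polynomial decay. -/
def pweight (α γ : ℝ) (k : ℕ) : ℝ := if k = 0 then 1 else γ * (k : ℝ) ^ (-α)

/-- Product weight `𝐩_{𝛂,𝛄}`. -/
def pweights {d : ℕ} (α γ : Fin d → ℝ) (k : Fin d → ℕ) : ℝ :=
  ∏ j, pweight (α j) (γ j) (k j)

/-- The weight `ε_{ω,γ}` with exponential decay. -/
def eweight (ω γ : ℝ) (k : ℕ) : ℝ := if k = 0 then 1 else γ * ω ^ k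

/-- Product weight `𝛆_{𝛚,𝛄}`. -/
def eweights {d : ℕ} (ω γ : Fin d → ℝ) (k : Fin d → ℕ) : ℝ :=
  ∏ j, eweight (ω j) (γ j) (k j)

/-!
The moment generating function of the standard Gaussian density `φ` gives `∫ e^{wx} φ = e^{w²/2}`.
Since `He_{k+1} = X He_k - He_k'` and `φ' = -x φ`, the derivative of `He_k(x) e^{wx} φ(x)` is
`(w He_k - He_{k+1})(x) e^{wx} φ(x)`; its integral vanishes, so `∫ He_k e^{wx} φ = e^{w²/2} w^k` by
induction on `k`. The integrand of `f̂(𝐤)` factors over the coordinates, hence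
`f̂(𝐤) = ∏ⱼ e^{wⱼ²/2} wⱼ^{kⱼ} / √(kⱼ!)`, and `f̂(𝐤)² / 𝛆(𝐤)` is a product of one-dimensional
terms `e^{wⱼ²} (wⱼ²/ωⱼ)^{kⱼ} / (γⱼ kⱼ!)` (for `kⱼ ≥ 1`), each summable like the exponential series.
-/

open Finset Polynomial ProbabilityTheory
open scoped NNReal Nat

section GaussianPDF

variable (μ : ℝ) {v : ℝ≥0}

lemma hasDerivAt_gaussianPDFReal (x : ℝ) :
    HasDerivAt (gaussianPDFReal μ v) (-(x - μ) / v * gaussianPDFReal μ v x) x := by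
  rw [gaussianPDFReal_def]
  refine (((((hasDerivAt_id' x).sub_const μ).fun_pow 2).fun_neg.div_const (2 * (v : ℝ))).exp.const_mul
    (√(2 * π * v))⁻¹).congr_deriv ?_
  ring

lemma integrable_mul_gaussianPDFReal_iff (hv : v ≠ 0) {f : ℝ → ℝ} :
    Integrable (fun x ↦ f x * gaussianPDFReal μ v x) ↔ Integrable f (gaussianReal μ v) := by
  rw [gaussianReal_of_var_ne_zero μ hv, integrable_withDensity_iff_integrable_smul'
    (measurable_gaussianPDF μ v) (ae_of_all _ fun _ ↦ gaussianPDF_lt_top)]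
  simp_rw [toReal_gaussianPDF, smul_eq_mul, mul_comm]

lemma integrable_pow_mul_exp_mul_gaussianPDFReal (hv : v ≠ 0) (n : ℕ) (w : ℝ) :
    Integrable (fun x ↦ x ^ n * exp (w * x) * gaussianPDFReal μ v x) :=
  (integrable_mul_gaussianPDFReal_iff μ hv).2 <|
    integrable_pow_mul_exp_of_mem_interior_integrableExpSet (X := id) (by simp) n

lemma integrable_aeval_mul_exp_mul_gaussianPDFReal {R : Type*} [CommSemiring R] [Algebra R ℝ]
    (hv : v ≠ 0) (p : R[X]) (w : ℝ) :
    Integrable (fun x ↦ aeval x p * exp (w * x) * gaussianPDFReal μ v x) := by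
  induction p using Polynomial.induction_on' with
  | add p q hp hq => simpa only [map_add, add_mul] using hp.fun_add hq
  | monomial n a =>
    simpa only [aeval_monomial, mul_assoc] using
      (integrable_pow_mul_exp_mul_gaussianPDFReal μ hv n w).const_mul (algebraMap R ℝ a)

lemma integral_exp_mul_mul_gaussianPDFReal (hv : v ≠ 0) (w : ℝ) :
    ∫ x, exp (w * x) * gaussianPDFReal μ v x = exp (μ * w + v * w ^ 2 / 2) := by
  rw [← congrFun mgf_id_gaussianReal w, mgf, integral_gaussianReal_eq_integral_smul hv]
  simp_rw [smul_eq_mul, mul_comm, id]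

end GaussianPDF

section Hermite

variable {R : Type*} [CommRing R] [Algebra R ℝ]

lemma integral_aeval_X_mul_sub_derivative_mul_exp_mul_gaussianPDFReal (p : R[X]) (w : ℝ) :
    ∫ x, aeval x (X * p - derivative p) * exp (w * x) * gaussianPDFReal 0 1 x
      = w * ∫ x, aeval x p * exp (w * x) * gaussianPDFReal 0 1 x := by
  set G : R[X] → ℝ → ℝ := fun q x ↦ aeval x q * exp (w * x) * gaussianPDFReal 0 1 x
  have hG (q : R[X]) : Integrable (G q) :=
    integrable_aeval_mul_exp_mul_gaussianPDFReal 0 one_ne_zero q w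
  have hderiv (x : ℝ) : HasDerivAt (G p) (w * G p x - G (X * p - derivative p) x) x := by
    refine ((p.hasDerivAt_aeval x).fun_mul (((hasDerivAt_id' x).const_mul w).exp)).fun_mul
      (hasDerivAt_gaussianPDFReal 0 x) |>.congr_deriv ?_
    simp only [G, map_sub, map_mul, aeval_X, NNReal.coe_one, sub_zero, div_one]
    ring
  have h := integral_eq_zero_of_hasDerivAt_of_integrable hderiv ((hG p).const_mul w |>.sub (hG _))
    (hG p)
  rw [integral_sub ((hG p).const_mul w) (hG _), integral_const_mul, sub_eq_zero] at h
  exact h.symm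

lemma integral_aeval_hermite_mul_exp_mul_gaussianPDFReal (k : ℕ) (w : ℝ) :
    ∫ x, aeval x (hermite k) * exp (w * x) * gaussianPDFReal 0 1 x = exp (w ^ 2 / 2) * w ^ k := by
  induction k with
  | zero => simpa using integral_exp_mul_mul_gaussianPDFReal 0 one_ne_zero w
  | succ k ih =>
    rw [hermite_succ, integral_aeval_X_mul_sub_derivative_mul_exp_mul_gaussianPDFReal, ih]
    ring

end Hermite

def hermiteCoeffExp (v : ℝ) (m : ℕ) : ℝ := exp (v ^ 2 / 2) * v ^ m / √(m ! : ℝ)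

lemma integral_exp_mul_Hnorm_mul_gaussianPDFReal (w : ℝ) (k : ℕ) :
    ∫ t, exp (w * t) * Hnorm k t * gaussianPDFReal 0 1 t = hermiteCoeffExp w k := by
  simp_rw [Hnorm, hermiteCoeffExp, ← integral_aeval_hermite_mul_exp_mul_gaussianPDFReal k w,
    ← integral_div]
  congr 1 with t
  ring

lemma gaussD_eq_prod {d : ℕ} (x : Fin d → ℝ) : gaussD d x = ∏ j, gaussianPDFReal 0 1 (x j) := by
  simp only [gaussD, gaussianPDFReal, prod_mul_distrib, prod_const, card_univ, Fintype.card_fin,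
    ← exp_sum, NNReal.coe_one, mul_one, sub_zero, ← sum_div, sum_neg_distrib]
  congr 1
  rw [sqrt_eq_rpow, ← rpow_neg (by positivity), ← rpow_natCast, ← rpow_mul (by positivity)]
  ring_nf

lemma hCoeff_exp_eq_prod {d : ℕ} (w : Fin d → ℝ) (k : Fin d → ℕ) :
    hCoeff (fun x ↦ exp (∑ j, w j * x j)) k = ∏ j, hermiteCoeffExp (w j) (k j) := by
  simp_rw [← integral_exp_mul_Hnorm_mul_gaussianPDFReal, ← integral_fintype_prod_volume_eq_prod,
    hCoeff, Hmulti, gaussD_eq_prod, exp_sum, ← prod_mul_distrib]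

lemma prod_hermiteCoeffExp {ι : Type*} [Fintype ι] (w : ι → ℝ) (k : ι → ℕ) :
    ∏ j, hermiteCoeffExp (w j) (k j)
      = exp ((∑ j, w j ^ 2) / 2) * (∏ j, w j ^ k j) / √(∏ j, ((k j)! : ℝ)) := by
  simp_rw [hermiteCoeffExp, prod_div_distrib, prod_mul_distrib, sum_div, exp_sum,
    sqrt_prod _ fun j _ ↦ Nat.cast_nonneg (k j)!]

lemma gaussianSqInt_exp {d : ℕ} (w : Fin d → ℝ) :
    GaussianSqInt (fun x : Fin d → ℝ ↦ exp (∑ j, w j * x j)) := by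
  have h (j : Fin d) := integrable_pow_mul_exp_mul_gaussianPDFReal 0 one_ne_zero 0 (2 * w j)
  simp_rw [GaussianSqInt, gaussD_eq_prod, exp_sum, ← prod_pow, ← prod_mul_distrib, volume_pi]
  refine Integrable.fintype_prod (f := fun j t ↦ exp (w j * t) ^ 2 * gaussianPDFReal 0 1 t)
    fun j ↦ (h j).congr (ae_of_all _ fun t ↦ ?_)
  simp only [pow_zero, one_mul, ← exp_nat_mul]
  ring_nf

lemma summable_fintype_prod_of_nonneg {ι β : Type*} [Fintype ι] {f : ι → β → ℝ}
    (hf₀ : ∀ i b, 0 ≤ f i b) (hf : ∀ i, Summable (f i)) :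
    Summable fun k : ι → β ↦ ∏ i, f i (k i) := by
  classical
  have hprod₀ (k : ι → β) : 0 ≤ ∏ i, f i (k i) := prod_nonneg fun i _ ↦ hf₀ i (k i)
  refine summable_of_sum_le (c := ∏ i, ∑' b, f i b) hprod₀ fun s ↦ ?_
  calc ∑ k ∈ s, ∏ i, f i (k i)
      ≤ ∑ k ∈ Fintype.piFinset fun i ↦ s.image (· i), ∏ i, f i (k i) :=
        sum_le_sum_of_subset_of_nonneg
          (fun k hk ↦ Fintype.mem_piFinset.2 fun i ↦ mem_image_of_mem _ hk) fun k _ _ ↦ hprod₀ k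
    _ = ∏ i, ∑ b ∈ s.image (· i), f i b := (prod_univ_sum _ _).symm
    _ ≤ ∏ i, ∑' b, f i b :=
        prod_le_prod (fun i _ ↦ sum_nonneg fun b _ ↦ hf₀ i b)
          fun i _ ↦ (hf i).sum_le_tsum _ fun b _ ↦ hf₀ i b

lemma eweight_nonneg {ω γ : ℝ} (hω : 0 ≤ ω) (hγ : 0 ≤ γ) (m : ℕ) : 0 ≤ eweight ω γ m := by
  unfold eweight
  split_ifs
  exacts [zero_le_one, mul_nonneg hγ (pow_nonneg hω m)]

-- For `m ≥ 1` the term is `γ⁻¹ * ((a / ω) ^ m / m !)`, also at `ω = 0` or `γ = 0` since `0⁻¹ = 0`.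
lemma summable_inv_eweight_mul_pow_div_factorial (ω γ a : ℝ) :
    Summable fun m : ℕ ↦ (eweight ω γ m)⁻¹ * (a ^ m / m !) := by
  rw [← summable_nat_add_iff 1]
  refine ((summable_nat_add_iff 1).2 (summable_pow_div_factorial (a / ω))).mul_left γ⁻¹
    |>.congr fun m ↦ ?_
  simp only [eweight, Nat.add_one_ne_zero, if_false]
  ring

lemma summable_inv_eweight_mul_sq_hermiteCoeffExp (ω γ v : ℝ) :
    Summable fun m : ℕ ↦ (eweight ω γ m)⁻¹ * hermiteCoeffExp v m ^ 2 := by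
  have hsq (m : ℕ) : hermiteCoeffExp v m ^ 2 = exp (v ^ 2) * ((v ^ 2) ^ m / m !) := by
    rw [hermiteCoeffExp, div_pow, mul_pow, sq_sqrt (Nat.cast_nonneg _), ← exp_nat_mul, ← pow_mul,
      pow_mul']
    ring_nf
  simpa only [hsq, mul_left_comm] using
    (summable_inv_eweight_mul_pow_div_factorial ω γ (v ^ 2)).mul_left (exp (v ^ 2))

/-- for `f(x) = exp(wᵀx)` the Hermite coefficients are
`f̂(k) = e^{wᵀw/2} w^k / √(k!)`, and `f` belongs to every Hermite space
`𝓗_{𝛆_{𝛚,𝛄}}` with exponentially decaying coefficients. -/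
theorem stmt8 {d : ℕ} (w : Fin d → ℝ) :
    (∀ k : Fin d → ℕ,
      hCoeff (fun x => Real.exp (∑ j, w j * x j)) k
        = Real.exp ((∑ j, (w j) ^ 2) / 2) * (∏ j, (w j) ^ (k j))
            / Real.sqrt (∏ j, (Nat.factorial (k j) : ℝ))) ∧
    (∀ ω γ : Fin d → ℝ, (∀ j, ω j ∈ Set.Ioo (0 : ℝ) 1) → (∀ j, 0 < γ j) →
      memHermite (eweights ω γ) (fun x => Real.exp (∑ j, w j * x j))) := by
  refine ⟨fun k ↦ by rw [hCoeff_exp_eq_prod, prod_hermiteCoeffExp], fun ω γ hω hγ ↦ ?_⟩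
  refine ⟨by fun_prop, gaussianSqInt_exp w, ?_⟩
  simp_rw [hCoeff_exp_eq_prod, eweights, ← prod_inv_distrib, ← prod_pow, ← prod_mul_distrib]
  refine summable_fintype_prod_of_nonneg
    (f := fun j m ↦ (eweight (ω j) (γ j) m)⁻¹ * hermiteCoeffExp (w j) m ^ 2)
    (fun j m ↦ mul_nonneg (inv_nonneg.2 (eweight_nonneg (hω j).1.le (hγ j).le m)) (sq_nonneg _))
    fun j ↦ summable_inv_eweight_mul_sq_hermiteCoeffExp (ω j) (γ j) (w j)

end
end

section
/- Let U : ℝ^d → ℝ^d be an orthogonal linear transformation, m ∈ ℕ₀, and let H^{(m)} denote the linear span of the multivariate Hermite polynomials of total degree m, H^{(m)} = span{H_𝐤 : 𝐤 ∈ ℕ₀^d, |𝐤| = m}. Then for every multi-index 𝐤 with |𝐤| = m the function x ↦ H_𝐤(Ux) belongs to H^{(m)}; consequently the map f ↦ f ∘ U restricts to a linear bijection of H^{(m)} onto itself that preserves the L²(ℝ^d, φ_d dx) inner product. -/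
open MeasureTheory Real

noncomputable section

/-- `H^{(m)}`, the span of the multivariate Hermite polynomials of total degree `m`. -/
def hermiteSpan (d m : ℕ) : Submodule ℝ ((Fin d → ℝ) → ℝ) :=
  Submodule.span ℝ {g | ∃ k : Fin d → ℕ, (∑ j, k j) = m ∧ g = Hmulti k}

/-
Write `a_i^† f = x_i f - ∂_i f` for the creation operator. The Hermite recurrence
`H_{n+1}(x) = (n+1)^{-1/2} (x H_n(x) - H_n'(x))` says `a_i^† H_k = √(k_i+1) H_{k+e_i}`, so `a_i^†`
maps `H^{(m)}` to `H^{(m+1)}` and every `H_k` with `|k| = m` is obtained from `H_0 = 1` by `m`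
creation steps. For orthogonal `U` the operators `a_i^†` transform like the coordinates of a
vector: `(a_i^† f) ∘ U = ∑_j U_ij a_j^† (f ∘ U)`. Hence, by induction on `m`, `H_k ∘ U ∈ H^{(m)}`.
Composition with `Uᵀ = U⁻¹` inverts `f ↦ f ∘ U`, and the inner product is preserved because
Lebesgue measure (`|det U| = 1`) and the Gaussian density (`|Ux| = |x|`) are invariant under `U`.
-/

open Matrix
open scoped Nat

section Creation

variable {ι : Type*} [DecidableEq ι]

def creation (i : ι) (f : (ι → ℝ) → ℝ) (x : ι → ℝ) : ℝ :=
  x i * f x - fderiv ℝ f x (Pi.single i 1)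

theorem creation_zero (i : ι) : creation i 0 = 0 := by
  funext x
  simp [creation]

variable [Fintype ι]

theorem creation_add {f g : (ι → ℝ) → ℝ} (hf : Differentiable ℝ f) (hg : Differentiable ℝ g)
    (i : ι) : creation i (f + g) = creation i f + creation i g := by
  funext x
  simp only [creation, fderiv_add (hf x) (hg x), Pi.add_apply, _root_.add_apply]
  ring

theorem creation_smul {f : (ι → ℝ) → ℝ} (hf : Differentiable ℝ f) (c : ℝ) (i : ι) :
    creation i (c • f) = c • creation i f := by
  funext x
  simp only [creation, fderiv_const_smul (hf x) c, Pi.smul_apply, _root_.smul_apply, smul_eq_mul]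
  ring

theorem sum_add_single (k : ι → ℕ) (i : ι) :
    ∑ j, (k + Pi.single i 1 : ι → ℕ) j = ∑ j, k j + 1 := by
  simp [Finset.sum_add_distrib]

theorem exists_eq_add_single_of_sum_eq_succ {k : ι → ℕ} {m : ℕ} (hk : ∑ j, k j = m + 1) :
    ∃ i, ∃ k' : ι → ℕ, k = k' + Pi.single i 1 ∧ ∑ j, k' j = m := by
  obtain ⟨i, -, hi⟩ := Finset.exists_ne_zero_of_sum_ne_zero (s := Finset.univ) (f := k)
    (by rw [hk]; exact m.succ_ne_zero)
  have hle : Pi.single i 1 ≤ k := by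
    intro j
    rcases eq_or_ne j i with rfl | hj
    · simpa [Nat.one_le_iff_ne_zero] using hi
    · simp [hj]
  refine ⟨i, k - Pi.single i 1, (tsub_add_cancel_of_le hle).symm, ?_⟩
  have := sum_add_single (k - Pi.single i 1) i
  rw [tsub_add_cancel_of_le hle, hk] at this
  omega

theorem fderiv_comp_mulVec_single (U : Matrix ι ι ℝ) {f : (ι → ℝ) → ℝ}
    (hf : Differentiable ℝ f) (j : ι) (x : ι → ℝ) :
    fderiv ℝ (fun y => f (U *ᵥ y)) x (Pi.single j 1) =
      ∑ i, U i j * fderiv ℝ f (U *ᵥ x) (Pi.single i 1) := by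
  let L : (ι → ℝ) →L[ℝ] (ι → ℝ) := LinearMap.toContinuousLinearMap (Matrix.mulVecLin U)
  have hcomp : HasFDerivAt (fun y => f (U *ᵥ y)) ((fderiv ℝ f (U *ᵥ x)).comp L) x :=
    (hf (U *ᵥ x)).hasFDerivAt.comp x L.hasFDerivAt
  have hcol : U *ᵥ Pi.single j 1 = ∑ i, U i j • Pi.single i 1 := by
    rw [mulVec_single_one, ← Finset.univ_sum_single (U.col j)]
    simp [← Pi.single_smul']
  rw [hcomp.fderiv, ContinuousLinearMap.comp_apply]
  change fderiv ℝ f (U *ᵥ x) (U *ᵥ Pi.single j 1) = _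
  simp [hcol, map_sum]

variable {U : Matrix ι ι ℝ}

theorem transpose_mulVec_mulVec (hU : U ∈ Matrix.orthogonalGroup ι ℝ) (x : ι → ℝ) :
    Uᵀ *ᵥ U *ᵥ x = x := by
  rw [mulVec_mulVec, (mem_orthogonalGroup_iff' ι ℝ).mp hU, one_mulVec]

theorem mulVec_transpose_mulVec (hU : U ∈ Matrix.orthogonalGroup ι ℝ) (x : ι → ℝ) :
    U *ᵥ Uᵀ *ᵥ x = x := by
  rw [mulVec_mulVec, (mem_orthogonalGroup_iff ι ℝ).mp hU, one_mulVec]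

theorem mulVec_surjective (hU : U ∈ Matrix.orthogonalGroup ι ℝ) : Function.Surjective (U *ᵥ ·) :=
  fun y => ⟨Uᵀ *ᵥ y, mulVec_transpose_mulVec hU y⟩

theorem sum_sq_mulVec (hU : U ∈ Matrix.orthogonalGroup ι ℝ) (x : ι → ℝ) :
    ∑ i, (U *ᵥ x) i ^ 2 = ∑ i, x i ^ 2 := by
  have hdot : ∀ v : ι → ℝ, ∑ i, v i ^ 2 = v ⬝ᵥ v := fun v => by simp [dotProduct, sq]
  rw [hdot, hdot, dotProduct_mulVec, ← mulVec_transpose, transpose_mulVec_mulVec hU]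

theorem abs_det_of_mem_orthogonalGroup (hU : U ∈ Matrix.orthogonalGroup ι ℝ) : |U.det| = 1 := by
  have h : U.det * U.det = 1 := (det_of_mem_unitary hU).1
  rcases mul_self_eq_one_iff.mp h with h | h <;> simp [h]

theorem measurePreserving_mulVec (hU : U ∈ Matrix.orthogonalGroup ι ℝ) :
    MeasurePreserving (U *ᵥ ·) volume volume := by
  have hdet := abs_det_of_mem_orthogonalGroup hU
  refine ⟨by fun_prop, ?_⟩
  change Measure.map (toLin' U) volume = volume
  rw [Real.map_matrix_volume_pi_eq_smul_volume_pi (by grind), abs_inv, hdet]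
  simp

theorem integral_comp_mulVec (hU : U ∈ Matrix.orthogonalGroup ι ℝ) (g : (ι → ℝ) → ℝ) :
    ∫ x, g (U *ᵥ x) = ∫ x, g x :=
  (measurePreserving_mulVec hU).integral_comp (.of_measurable_inverse (by fun_prop)
    ((mulVec_surjective hU).range_eq ▸ .univ) (by fun_prop) (transpose_mulVec_mulVec hU)) g

theorem creation_apply_mulVec (hU : U ∈ Matrix.orthogonalGroup ι ℝ) {f : (ι → ℝ) → ℝ}
    (hf : Differentiable ℝ f) (i : ι) (x : ι → ℝ) :
    creation i f (U *ᵥ x) = ∑ j, U i j * creation j (fun y => f (U *ᵥ y)) x := by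
  set grad : ι → ℝ := fun l => fderiv ℝ f (U *ᵥ x) (Pi.single l 1)
  have hgrad : ∑ j, U i j * ∑ l, U l j * grad l = grad i := by
    conv_rhs => rw [← mulVec_transpose_mulVec hU grad]
    simp [mulVec, dotProduct]
  simp only [creation, fderiv_comp_mulVec_single U hf, mul_sub, Finset.sum_sub_distrib, ← mul_assoc,
    ← Finset.sum_mul]
  rw [hgrad]
  rfl

end Creation

section Hermite

variable {d : ℕ}

theorem hasDerivAt_Hnorm (n : ℕ) (x : ℝ) :
    HasDerivAt (Hnorm n)
      (Polynomial.aeval x (Polynomial.derivative (Polynomial.hermite n)) / √(n ! : ℝ)) x := by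
  unfold Hnorm
  simpa [div_eq_mul_inv] using
    (Polynomial.hasDerivAt_aeval (Polynomial.hermite n) x).mul_const (√(n ! : ℝ))⁻¹

theorem sqrt_succ_mul_Hnorm_succ (n : ℕ) (x : ℝ) :
    √((n : ℝ) + 1) * Hnorm (n + 1) x = x * Hnorm n x - deriv (Hnorm n) x := by
  have hfac : √((n + 1)! : ℝ) = √((n : ℝ) + 1) * √(n ! : ℝ) := by
    rw [Nat.factorial_succ, Nat.cast_mul, Real.sqrt_mul (by positivity), Nat.cast_succ]
  have : √((n : ℝ) + 1) ≠ 0 := by positivity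
  have : √(n ! : ℝ) ≠ 0 := by positivity
  rw [(hasDerivAt_Hnorm n x).deriv, Hnorm, Hnorm, Polynomial.hermite_succ, hfac]
  simp only [map_sub, map_mul, Polynomial.aeval_X]
  field_simp

theorem Hmulti_eq_mul_prod_erase (k : Fin d → ℕ) (i : Fin d) (x : Fin d → ℝ) :
    Hmulti k x = Hnorm (k i) (x i) * ∏ j ∈ Finset.univ.erase i, Hnorm (k j) (x j) :=
  (Finset.mul_prod_erase _ _ (Finset.mem_univ i)).symm

theorem Hmulti_add_single (k : Fin d → ℕ) (i : Fin d) (x : Fin d → ℝ) :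
    Hmulti (k + Pi.single i 1) x =
      Hnorm (k i + 1) (x i) * ∏ j ∈ Finset.univ.erase i, Hnorm (k j) (x j) := by
  rw [Hmulti_eq_mul_prod_erase _ i]
  congr 1
  · simp
  · refine Finset.prod_congr rfl fun j hj => ?_
    simp [Finset.ne_of_mem_erase hj]

theorem Hmulti_zero : Hmulti (0 : Fin d → ℕ) = 1 := by
  funext x
  simp [Hmulti, Hnorm]

theorem hasFDerivAt_Hmulti (k : Fin d → ℕ) (x : Fin d → ℝ) :
    HasFDerivAt (Hmulti k)
      (∑ i, (∏ j ∈ Finset.univ.erase i, Hnorm (k j) (x j)) •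
        deriv (Hnorm (k i)) (x i) • (ContinuousLinearMap.proj i : (Fin d → ℝ) →L[ℝ] ℝ)) x :=
  HasFDerivAt.finsetProd fun i _ => by
    exact (hasDerivAt_Hnorm (k i) (x i)).differentiableAt.hasDerivAt.comp_hasFDerivAt x
      (hasFDerivAt_apply (𝕜 := ℝ) i x)

theorem differentiable_Hmulti (k : Fin d → ℕ) : Differentiable ℝ (Hmulti k) :=
  fun x => (hasFDerivAt_Hmulti k x).differentiableAt

theorem fderiv_Hmulti_single (k : Fin d → ℕ) (i : Fin d) (x : Fin d → ℝ) :
    fderiv ℝ (Hmulti k) x (Pi.single i 1) =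
      deriv (Hnorm (k i)) (x i) * ∏ j ∈ Finset.univ.erase i, Hnorm (k j) (x j) := by
  rw [(hasFDerivAt_Hmulti k x).fderiv, _root_.sum_apply,
    Finset.sum_eq_single_of_mem i (Finset.mem_univ i)]
  · simp [mul_comm]
  · intro j _ hj
    simp [hj.symm]

theorem creation_Hmulti (k : Fin d → ℕ) (i : Fin d) :
    creation i (Hmulti k) = √((k i : ℝ) + 1) • Hmulti (k + Pi.single i 1) := by
  funext x
  rw [creation, fderiv_Hmulti_single, Hmulti_eq_mul_prod_erase k i, Pi.smul_apply, smul_eq_mul,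
    Hmulti_add_single]
  linear_combination (∏ j ∈ Finset.univ.erase i, Hnorm (k j) (x j)) *
    (sqrt_succ_mul_Hnorm_succ (k i) (x i)).symm

theorem differentiable_of_mem_hermiteSpan {m : ℕ} {f : (Fin d → ℝ) → ℝ}
    (hf : f ∈ hermiteSpan d m) : Differentiable ℝ f := by
  induction hf using Submodule.span_induction with
  | mem g hg => obtain ⟨k, -, rfl⟩ := hg; exact differentiable_Hmulti k
  | zero => exact differentiable_const 0
  | add f g _ _ hf hg => exact hf.add hg
  | smul c f _ hf => exact hf.const_smul c

theorem creation_mem_hermiteSpan {m : ℕ} {f : (Fin d → ℝ) → ℝ} (hf : f ∈ hermiteSpan d m)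
    (i : Fin d) : creation i f ∈ hermiteSpan d (m + 1) := by
  induction hf using Submodule.span_induction with
  | mem g hg =>
    obtain ⟨k, rfl, rfl⟩ := hg
    rw [creation_Hmulti]
    exact Submodule.smul_mem _ _ (Submodule.subset_span ⟨_, sum_add_single k i, rfl⟩)
  | zero => simpa only [creation_zero] using (hermiteSpan d (m + 1)).zero_mem
  | add f g hf hg hf' hg' =>
    rw [creation_add (differentiable_of_mem_hermiteSpan hf) (differentiable_of_mem_hermiteSpan hg)]
    exact add_mem hf' hg'
  | smul c f hf hf' =>
    rw [creation_smul (differentiable_of_mem_hermiteSpan hf)]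
    exact Submodule.smul_mem _ c hf'

theorem Hmulti_comp_mulVec_mem_hermiteSpan {U : Matrix (Fin d) (Fin d) ℝ}
    (hU : U ∈ Matrix.orthogonalGroup (Fin d) ℝ) {m : ℕ} {k : Fin d → ℕ} (hk : ∑ j, k j = m) :
    (fun x => Hmulti k (U *ᵥ x)) ∈ hermiteSpan d m := by
  induction m generalizing k with
  | zero =>
    obtain rfl : k = 0 := funext fun j => Finset.sum_eq_zero_iff.mp hk j (Finset.mem_univ j)
    rw [Hmulti_zero]
    exact Submodule.subset_span ⟨0, by simp, Hmulti_zero.symm⟩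
  | succ m ih =>
    obtain ⟨i, k, rfl, hkm⟩ := exists_eq_add_single_of_sum_eq_succ hk
    have hc : √((k i : ℝ) + 1) ≠ 0 := by positivity
    have hrot : (fun x => Hmulti (k + Pi.single i 1) (U *ᵥ x)) =
        (√((k i : ℝ) + 1))⁻¹ • ∑ j, U i j • creation j (fun y => Hmulti k (U *ᵥ y)) := by
      funext x
      have h := creation_apply_mulVec hU (differentiable_Hmulti k) i x
      rw [creation_Hmulti] at h
      simp only [Pi.smul_apply, Finset.sum_apply, smul_eq_mul] at h ⊢
      rw [← h, inv_mul_cancel_left₀ hc]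
    rw [hrot]
    exact Submodule.smul_mem _ _ (Submodule.sum_mem _ fun j _ =>
      Submodule.smul_mem _ _ (creation_mem_hermiteSpan (ih hkm) j))

theorem hermiteSpan_le_comap_comp_mulVec {U : Matrix (Fin d) (Fin d) ℝ}
    (hU : U ∈ Matrix.orthogonalGroup (Fin d) ℝ) (m : ℕ) :
    hermiteSpan d m ≤ (hermiteSpan d m).comap (LinearMap.funLeft ℝ ℝ (U *ᵥ ·)) :=
  Submodule.span_le.mpr fun _ ⟨_, hk, hg⟩ => hg ▸ Hmulti_comp_mulVec_mem_hermiteSpan hU hk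

theorem gaussD_mulVec {U : Matrix (Fin d) (Fin d) ℝ} (hU : U ∈ Matrix.orthogonalGroup (Fin d) ℝ)
    (x : Fin d → ℝ) : gaussD d (U *ᵥ x) = gaussD d x := by
  rw [gaussD, gaussD, sum_sq_mulVec hU]

end Hermite

/-- for an orthogonal transform `U` of `ℝ^d` and any `m`, each
`x ↦ H_𝐤(Ux)` with `|𝐤| = m` lies in `H^{(m)}`; consequently `f ↦ f ∘ U` restricts to a
linear bijection of `H^{(m)}` onto itself preserving the `L²(ℝ^d, φ_d dx)` inner product. -/
theorem stmt19 {d : ℕ} (U : Matrix (Fin d) (Fin d) ℝ)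
    (hU : U ∈ Matrix.orthogonalGroup (Fin d) ℝ) (m : ℕ) :
    -- each transformed Hermite polynomial of degree m stays in H^{(m)}
    (∀ k : Fin d → ℕ, (∑ j, k j) = m →
      (fun x => Hmulti k (U.mulVec x)) ∈ hermiteSpan d m) ∧
    -- `f ↦ f ∘ U` maps H^{(m)} into itself ...
    (∀ f : (Fin d → ℝ) → ℝ, f ∈ hermiteSpan d m →
      (fun x => f (U.mulVec x)) ∈ hermiteSpan d m) ∧
    -- ... injectively,
    (∀ f g : (Fin d → ℝ) → ℝ, f ∈ hermiteSpan d m → g ∈ hermiteSpan d m →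
      (fun x => f (U.mulVec x)) = (fun x => g (U.mulVec x)) → f = g) ∧
    -- ... surjectively,
    (∀ f : (Fin d → ℝ) → ℝ, f ∈ hermiteSpan d m →
      ∃ g ∈ hermiteSpan d m, (fun x => g (U.mulVec x)) = f) ∧
    -- ... preserving the Gaussian L² inner product.
    (∀ f g : (Fin d → ℝ) → ℝ, f ∈ hermiteSpan d m → g ∈ hermiteSpan d m →
      ∫ x, f (U.mulVec x) * g (U.mulVec x) * gaussD d x
        = ∫ x, f x * g x * gaussD d x) := by
  have hUt : Uᵀ ∈ Matrix.orthogonalGroup (Fin d) ℝ := transpose_mem_unitaryGroup_iff.mpr hU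
  refine ⟨fun k hk => Hmulti_comp_mulVec_mem_hermiteSpan hU hk,
    fun f hf => hermiteSpan_le_comap_comp_mulVec hU m hf, ?_, ?_, ?_⟩
  · intro f g _ _ h
    exact (mulVec_surjective hU).injective_comp_right h
  · intro f hf
    exact ⟨_, hermiteSpan_le_comap_comp_mulVec hUt m hf,
      funext fun x => congrArg f (transpose_mulVec_mulVec hU x)⟩
  · intro f g _ _
    simpa only [gaussD_mulVec hU] using integral_comp_mulVec hU fun y => f y * g y * gaussD d y

end
end
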